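/- In the free group F = FreeGroup (Fin 7) with free generators x₁, …, x₇, the group homomorphism FreeGroup (Fin 3) →* F determined by sending the three free generators to x₃·x₅, x₆·x₂, and x₁·x₇ respectively is injective; hence the subgroup generated by {x₃x₅, x₆x₂, x₁x₇} is free of rank 3 (this is the statement K₃ ≅ F[S²]₃, a free group of rank 3). -/
import Mathlib


/-- The map sending the three free generators of `FreeGroup (Fin 3)` to
`x₃·x₅`, `x₆·x₂`, `x₁·x₇` in `F = FreeGroup (Fin 7)` (0-based indices). -/
def kGen : Fin 3 → FreeGroup (Fin 7) :=
  ![FreeGroup.of 2 * FreeGroup.of 4, FreeGroup.of 5 * FreeGroup.of 1,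
    FreeGroup.of 0 * FreeGroup.of 6]

/-- A retraction datum: sends `x₃ ↦ a₀`, `x₆ ↦ a₁`, `x₁ ↦ a₂`, others to `1`. -/
def rGen : Fin 7 → FreeGroup (Fin 3) :=
  ![FreeGroup.of 2, 1, FreeGroup.of 0, 1, 1, FreeGroup.of 1, 1]

lemma r_comp_k :
    (FreeGroup.lift rGen).comp (FreeGroup.lift kGen) = MonoidHom.id _ := by
  ext i
  fin_cases i <;> simp [kGen, rGen] <;> rfl

lemma k_injective : Function.Injective ⇑(FreeGroup.lift kGen) := by
  have h : Function.LeftInverse ⇑(FreeGroup.lift rGen) ⇑(FreeGroup.lift kGen) := fun x => by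
    have := DFunLike.congr_fun r_comp_k x
    simpa using this
  exact h.injective

lemma range_kGen : Set.range kGen = {kGen 0, kGen 1, kGen 2} := by
  ext x
  constructor
  · rintro ⟨i, rfl⟩; fin_cases i <;> simp
  · rintro (rfl | rfl | rfl) <;> exact ⟨_, rfl⟩

/-- The homomorphism `FreeGroup (Fin 3) →* FreeGroup (Fin 7)` sending the
three free generators to `x₃x₅`, `x₆x₂`, `x₁x₇` is injective; hence the subgroup generated by
these three elements is free of rank 3 (this is `K₃ ≅ F[S²]₃`). -/
theorem K3_free_of_rank_three :
    Function.Injective ⇑(FreeGroup.lift kGen) ∧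
      Nonempty ((Subgroup.closure {kGen 0, kGen 1, kGen 2} : Subgroup (FreeGroup (Fin 7)))
        ≃* FreeGroup (Fin 3)) := by
  refine ⟨k_injective, ⟨?_⟩⟩
  have hrange : (FreeGroup.lift kGen).range
      = Subgroup.closure {kGen 0, kGen 1, kGen 2} := by
    rw [FreeGroup.range_lift_eq_closure, range_kGen]
  exact ((MulEquiv.subgroupCongr hrange).symm.trans
    (MonoidHom.ofInjective k_injective).symm)
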